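/- arXiv:2510.07273 — 9 statements merged into one kernel-verified Lean document; each statement's English description precedes it below -/
import Mathlib

section
/- Let K be a real symmetric matrix indexed by a nonempty finite set, with an orthonormal eigenbasis (u_i) and corresponding real eigenvalues (λ_i), and let z be a unit vector. Let ρ ∈ (0,1], d > 0, κ > 0 and 0 < γ̂ < γ < 1 be constants, and set ε := γ − γ̂. Assume that every eigenvalue satisfies λ_i ≤ (1+κ)d and that ⟨z, K z⟩ ≥ (1−γ̂)ρd. Then Σ_{i : λ_i ≥ (1−γ)ρd} ⟨u_i, z⟩² ≥ ερ/(1+κ − (1−γ)ρ). -/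
open Finset

/-- **Tightened Proposition 2.31 (deterministic core).** Let `K` be a real symmetric matrix
on a nonempty finite index set with orthonormal eigenbasis `u` and eigenvalues `lam`, and
let `z` be a unit vector. Given `ρ ∈ (0,1]`, `d > 0`, `κ > 0`, `0 < γ̂ < γ < 1`, with
`ε := γ − γ̂`: if every eigenvalue is at most `(1+κ)d` and `⟨z, K z⟩ ≥ (1−γ̂)ρd`, then the
spectral mass of `z` on eigenvalues `≥ (1−γ)ρd` is at least `ερ/(1+κ−(1−γ)ρ)`. -/
theorem spectral_mass_lower_bound {ι : Type*} [Fintype ι] [Nonempty ι] [DecidableEq ι]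
    (K : Matrix ι ι ℝ) (hKsym : K.IsSymm)
    (u : ι → ι → ℝ) (lam : ι → ℝ)
    (hortho : ∀ i j, dotProduct (u i) (u j) = if i = j then (1 : ℝ) else 0)
    (heig : ∀ i, K.mulVec (u i) = lam i • u i)
    (z : ι → ℝ) (hz : dotProduct z z = 1)
    (ρ d κ γ γ' : ℝ) (hρ0 : 0 < ρ) (hρ1 : ρ ≤ 1) (hd : 0 < d) (hκ : 0 < κ)
    (hγ'0 : 0 < γ') (hγ'γ : γ' < γ) (hγ1 : γ < 1)
    (hmax : ∀ i, lam i ≤ (1 + κ) * d)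
    (hquad : (1 - γ') * ρ * d ≤ dotProduct z (K.mulVec z)) :
    (γ - γ') * ρ / (1 + κ - (1 - γ) * ρ) ≤
      ∑ i ∈ Finset.univ.filter (fun i => (1 - γ) * ρ * d ≤ lam i),
        (dotProduct (u i) z) ^ 2 := by
  classical
  set c : ι → ℝ := fun i => dotProduct (u i) z with hc
  -- The matrix with rows `u i`
  set U : Matrix ι ι ℝ := Matrix.of u with hU
  have hUUT : U * U.transpose = 1 := by
    ext i j
    simpa [Matrix.mul_apply, Matrix.one_apply, dotProduct, hU] using hortho i j
  have hUTU : U.transpose * U = 1 := mul_eq_one_comm.mp hUUT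
  have huu : ∀ k l, ∑ i, u i k * u i l = if k = l then (1:ℝ) else 0 := by
    intro k l
    have := congrFun (congrFun hUTU k) l
    simpa [Matrix.mul_apply, Matrix.one_apply, Matrix.transpose_apply, hU] using this
  -- decomposition of z in the eigenbasis
  have hzdec : ∀ k, z k = ∑ i, c i * u i k := by
    intro k
    have h1 : ∑ i, c i * u i k = ∑ i, ∑ l, z l * (u i k * u i l) := by
      apply Finset.sum_congr rfl; intro i _
      simp only [hc, dotProduct, Finset.sum_mul]
      apply Finset.sum_congr rfl; intro l _; ring
    rw [h1, Finset.sum_comm]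
    simp only [← Finset.mul_sum, huu]
    simp
  -- total mass is 1
  have hsum1 : ∑ i, (c i) ^ 2 = 1 := by
    have h1 : ∑ i, (c i) ^ 2 = ∑ i, ∑ k, z k * (c i * u i k) := by
      apply Finset.sum_congr rfl; intro i _
      have : (c i) ^ 2 = c i * ∑ k, u i k * z k := by rw [sq]; rfl
      rw [this, Finset.mul_sum]
      apply Finset.sum_congr rfl; intro k _; ring
    rw [h1, Finset.sum_comm]
    have h2 : ∀ k, ∑ i, z k * (c i * u i k) = z k * z k := by
      intro k
      rw [← Finset.mul_sum, ← hzdec k]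
    simp only [h2]
    rw [← hz]; rfl
  -- quadratic form
  have hKz : ∀ k, K.mulVec z k = ∑ i, c i * (lam i * u i k) := by
    intro k
    have h1 : K.mulVec z k = ∑ l, K k l * z l := rfl
    rw [h1]
    have : ∀ l, K k l * z l = ∑ i, c i * (K k l * u i l) := by
      intro l
      rw [hzdec l, Finset.mul_sum]
      apply Finset.sum_congr rfl; intro i _; ring
    simp only [this]
    rw [Finset.sum_comm]
    apply Finset.sum_congr rfl; intro i _
    rw [← Finset.mul_sum]
    congr 1
    have := congrFun (heig i) k
    simpa [Matrix.mulVec, dotProduct] using this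
  have hquadform : dotProduct z (K.mulVec z) = ∑ i, lam i * (c i) ^ 2 := by
    have : dotProduct z (K.mulVec z) = ∑ k, z k * ∑ i, c i * (lam i * u i k) := by
      apply Finset.sum_congr rfl; intro k _; rw [hKz k]
    rw [this]
    have h1 : ∑ k, z k * ∑ i, c i * (lam i * u i k)
        = ∑ k, ∑ i, z k * (c i * (lam i * u i k)) := by
      apply Finset.sum_congr rfl; intro k _; rw [Finset.mul_sum]
    rw [h1, Finset.sum_comm]
    apply Finset.sum_congr rfl; intro i _
    have h2 : ∑ k, z k * (c i * (lam i * u i k)) = lam i * c i * ∑ k, u i k * z k := by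
      rw [Finset.mul_sum]
      apply Finset.sum_congr rfl; intro k _; ring
    rw [h2]
    have hci : ∑ k, u i k * z k = c i := rfl
    rw [hci]; ring
  -- split the sum
  set S : Finset ι := Finset.univ.filter (fun i => (1 - γ) * ρ * d ≤ lam i) with hS
  set m : ℝ := ∑ i ∈ S, (c i) ^ 2 with hm
  have hsplit : ∑ i ∈ S, (c i)^2 + ∑ i ∈ Finset.univ.filter (fun i => ¬ ((1 - γ) * ρ * d ≤ lam i)), (c i)^2 = 1 := by
    rw [hS, Finset.sum_filter_add_sum_filter_not]; exact hsum1
  have hcompl : ∑ i ∈ Finset.univ.filter (fun i => ¬ ((1 - γ) * ρ * d ≤ lam i)), (c i)^2 = 1 - m := by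
    linarith [hsplit]
  have hsplit2 : ∑ i, lam i * (c i)^2 =
      ∑ i ∈ S, lam i * (c i)^2 +
      ∑ i ∈ Finset.univ.filter (fun i => ¬ ((1 - γ) * ρ * d ≤ lam i)), lam i * (c i)^2 := by
    rw [hS, Finset.sum_filter_add_sum_filter_not]
  have hb1 : ∑ i ∈ S, lam i * (c i)^2 ≤ (1 + κ) * d * m := by
    rw [hm, Finset.mul_sum]
    apply Finset.sum_le_sum
    intro i _
    exact mul_le_mul_of_nonneg_right (hmax i) (sq_nonneg _)
  have hb2 : ∑ i ∈ Finset.univ.filter (fun i => ¬ ((1 - γ) * ρ * d ≤ lam i)), lam i * (c i)^2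
      ≤ (1 - γ) * ρ * d * (1 - m) := by
    rw [← hcompl, Finset.mul_sum]
    apply Finset.sum_le_sum
    intro i hi
    simp only [Finset.mem_filter, not_le] at hi
    exact mul_le_mul_of_nonneg_right (le_of_lt hi.2) (sq_nonneg _)
  have hmain : (1 - γ') * ρ * d ≤ (1 + κ) * d * m + (1 - γ) * ρ * d * (1 - m) := by
    calc (1 - γ') * ρ * d ≤ dotProduct z (K.mulVec z) := hquad
      _ = ∑ i, lam i * (c i)^2 := hquadform
      _ = _ := hsplit2
      _ ≤ _ := add_le_add hb1 hb2
  -- final arithmetic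
  have hDen : 0 < 1 + κ - (1 - γ) * ρ := by nlinarith
  rw [div_le_iff₀ hDen]
  show (γ - γ') * ρ ≤ m * (1 + κ - (1 - γ) * ρ)
  nlinarith [hmain, hd]
end

section
/- Let X be a real random variable on a probability space with E[X] = 0, Var(X) = σ² where 0 < σ < M, and |X| ≤ M almost surely. Then for every θ with 0 ≤ θ < 1, P(X > θσ²/M) ≥ (1−θ)(M²σ² + θσ⁴)/(2(M⁴ − θ²σ⁴)). -/
open MeasureTheory ProbabilityTheory

/-- **Universal anti-concentration lower bound.** If `X` has mean `0`, variance `σ²` with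
`0 < σ < M`, and `|X| ≤ M` almost surely, then for every `0 ≤ θ < 1`,
`P(X > θσ²/M) ≥ (1−θ)(M²σ² + θσ⁴)/(2(M⁴ − θ²σ⁴))`. -/
theorem anti_concentration {Ω : Type*} [MeasurableSpace Ω] (μ : Measure Ω)
    [IsProbabilityMeasure μ] (X : Ω → ℝ) (hXmeas : Measurable X)
    (σ M : ℝ) (hσ : 0 < σ) (hσM : σ < M)
    (hmean : (∫ ω, X ω ∂μ) = 0)
    (hvar : variance X μ = σ ^ 2)
    (hbdd : ∀ᵐ ω ∂μ, |X ω| ≤ M)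
    (θ : ℝ) (hθ0 : 0 ≤ θ) (hθ1 : θ < 1) :
    (1 - θ) * (M ^ 2 * σ ^ 2 + θ * σ ^ 4) / (2 * (M ^ 4 - θ ^ 2 * σ ^ 4)) ≤
      (μ {ω | θ * σ ^ 2 / M < X ω}).toReal := by
  have hM : 0 < M := hσ.trans hσM
  set t : ℝ := θ * σ ^ 2 / M with ht
  set s : Set Ω := {ω | t < X ω} with hs
  have hsm : MeasurableSet s := hXmeas measurableSet_Ioi
  -- integrability
  have hX2 : MemLp X 2 μ :=
    MemLp.of_bound hXmeas.aestronglyMeasurable M (by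
      filter_upwards [hbdd] with ω h using by simpa using h)
  have hXint : Integrable X μ := hX2.integrable (by norm_num)
  have hsq : Integrable (fun ω => X ω ^ 2) μ := hX2.integrable_sq
  have hcongr : (fun ω => (X ω - t) * (X ω + M))
      = fun ω => X ω ^ 2 + (M - t) * X ω - t * M := by
    funext ω; ring
  have hlin : Integrable (fun ω => (M - t) * X ω) μ := hXint.const_mul (M - t)
  have hadd : Integrable (fun ω => X ω ^ 2 + (M - t) * X ω) μ := hsq.add hlin
  have hg : Integrable (fun ω => (X ω - t) * (X ω + M)) μ := by
    rw [hcongr]; exact hadd.sub (integrable_const (t * M))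
  -- value of the integral
  have hEX2 : (∫ ω, X ω ^ 2 ∂μ) = σ ^ 2 := by
    have hv := variance_eq_sub hX2
    rw [hvar] at hv
    simp only [hmean] at hv
    have : σ ^ 2 = (∫ ω, X ω ^ 2 ∂μ) - 0 ^ 2 := by
      simpa using hv
    simpa using this.symm
  have hint : (∫ ω, (X ω - t) * (X ω + M) ∂μ) = σ ^ 2 - t * M := by
    rw [hcongr, integral_sub hadd (integrable_const (t * M)),
      integral_add hsq hlin, integral_const_mul, hEX2, hmean]
    simp
  -- comparison with indicator
  have hind : Integrable (s.indicator fun _ => (M - t) * (2 * M)) μ :=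
    (integrable_const _).indicator hsm
  have hmono : (∫ ω, (X ω - t) * (X ω + M) ∂μ)
      ≤ ∫ ω, s.indicator (fun _ => (M - t) * (2 * M)) ω ∂μ := by
    refine integral_mono_ae hg hind ?_
    filter_upwards [hbdd] with ω h
    rw [abs_le] at h
    by_cases hω : ω ∈ s
    · rw [Set.indicator_of_mem hω]
      have h1 : t < X ω := hω
      nlinarith [h.1, h.2]
    · rw [Set.indicator_of_notMem hω]
      have h1 : X ω ≤ t := not_lt.mp hω
      nlinarith [h.1, h.2]
  rw [hint, integral_indicator_const _ hsm] at hmono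
  set p : ℝ := (μ s).toReal with hp
  have hp0 : 0 ≤ p := ENNReal.toReal_nonneg
  have hmono' : σ ^ 2 - t * M ≤ p * ((M - t) * (2 * M)) := by
    simpa [smul_eq_mul, hp, Measure.real] using hmono
  have htM : t * M = θ * σ ^ 2 := by
    rw [ht]; field_simp [ne_of_gt hM]
  rw [htM, ht] at hmono'
  have hkey : (1 - θ) * σ ^ 2 ≤ p * (2 * (M ^ 2 - θ * σ ^ 2)) := by
    have hMne : M ≠ 0 := ne_of_gt hM
    have : (M - θ * σ ^ 2 / M) * (2 * M) = 2 * (M ^ 2 - θ * σ ^ 2) := by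
      field_simp
    rw [this] at hmono'
    linarith
  -- final algebra
  have hσ2M2 : σ ^ 2 < M ^ 2 := by nlinarith
  have hθsq : θ ^ 2 ≤ 1 := by nlinarith
  have h4 : σ ^ 4 < M ^ 4 := by nlinarith [sq_nonneg σ, pow_pos hσ 2]
  have hden : 0 < 2 * (M ^ 4 - θ ^ 2 * σ ^ 4) := by
    nlinarith [pow_pos hσ 4]
  rw [div_le_iff₀ hden]
  nlinarith [mul_le_mul_of_nonneg_right hkey (by nlinarith : (0:ℝ) ≤ M ^ 2 + θ * σ ^ 2),
    mul_nonneg hp0 (sq_nonneg σ)]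
end

section
/- Let 0 < σ < M and 0 ≤ θ < 1, and set t = θσ²/M. There exists a real random variable X (equivalently, a probability distribution on ℝ supported on the three points {−M, t, M}) such that E[X] = 0, Var(X) = σ², |X| ≤ M almost surely, and P(X > t) = (1−θ)(M²σ² + θσ⁴)/(2(M⁴ − θ²σ⁴)). -/
open MeasureTheory ProbabilityTheory

/-- **Tightness of the universal anti-concentration bound.** For `0 < σ < M` and
`0 ≤ θ < 1`, with `t = θσ²/M`, there is a probability distribution on `ℝ` supported on the
three points `{−M, t, M}` with mean `0`, variance `σ²`, `|X| ≤ M` almost surely, and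
`P(X > t) = (1−θ)(M²σ² + θσ⁴)/(2(M⁴ − θ²σ⁴))`. -/
theorem anti_concentration_tight (σ M θ : ℝ) (hσ : 0 < σ) (hσM : σ < M)
    (hθ0 : 0 ≤ θ) (hθ1 : θ < 1) :
    ∃ μ : Measure ℝ, IsProbabilityMeasure μ ∧
      (∀ᵐ x ∂μ, x = -M ∨ x = θ * σ ^ 2 / M ∨ x = M) ∧
      (∫ x, x ∂μ) = 0 ∧
      variance id μ = σ ^ 2 ∧
      (∀ᵐ x ∂μ, |x| ≤ M) ∧
      (μ {x | θ * σ ^ 2 / M < x}).toReal =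
        (1 - θ) * (M ^ 2 * σ ^ 2 + θ * σ ^ 4) / (2 * (M ^ 4 - θ ^ 2 * σ ^ 4)) := by
  have hM : 0 < M := hσ.trans hσM
  have hM0 : M ≠ 0 := ne_of_gt hM
  set t : ℝ := θ * σ ^ 2 / M with ht
  have ht0 : 0 ≤ t := by positivity
  have htσ : t < σ := by
    rw [ht, div_lt_iff₀ hM]; nlinarith
  have htM : t < M := htσ.trans hσM
  have hden2 : (0:ℝ) < M ^ 2 - θ * σ ^ 2 := by nlinarith
  have hden4 : (0:ℝ) < M ^ 4 - θ ^ 2 * σ ^ 4 := by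
    nlinarith [mul_pos hden2 (show (0:ℝ) < M ^ 2 + θ * σ ^ 2 by positivity)]
  set pt : ℝ := (M ^ 2 - σ ^ 2) * M ^ 2 / (M ^ 4 - θ ^ 2 * σ ^ 4) with hptdef
  set pp : ℝ := σ ^ 2 * (1 - θ) / (2 * (M ^ 2 - θ * σ ^ 2)) with hppdef
  set pm : ℝ := 1 - pt - pp with hpmdef
  have hpt0 : 0 ≤ pt := by
    apply div_nonneg
    · exact mul_nonneg (by nlinarith) (sq_nonneg M)
    · linarith
  have hpp0 : 0 ≤ pp := by
    apply div_nonneg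
    · exact mul_nonneg (sq_nonneg σ) (by linarith)
    · linarith
  have hmean : -M * pm + t * pt + M * pp = 0 := by
    rw [hpmdef, hptdef, hppdef, ht]
    have h2' : M ^ 2 - σ ^ 2 * θ ≠ 0 := by rw [mul_comm]; exact ne_of_gt hden2
    have h4' : M ^ 4 - σ ^ 4 * θ ^ 2 ≠ 0 := by rw [mul_comm]; exact ne_of_gt hden4
    field_simp
    ring
  have hvar : M ^ 2 * pm + t ^ 2 * pt + M ^ 2 * pp = σ ^ 2 := by
    rw [hpmdef, hptdef, hppdef, ht]
    have h2' : M ^ 2 - σ ^ 2 * θ ≠ 0 := by rw [mul_comm]; exact ne_of_gt hden2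
    have h4' : M ^ 4 - σ ^ 4 * θ ^ 2 ≠ 0 := by rw [mul_comm]; exact ne_of_gt hden4
    field_simp
    ring
  have hpm0 : 0 ≤ pm := by nlinarith
  set μ : Measure ℝ := ENNReal.ofReal pm • Measure.dirac (-M)
      + ENNReal.ofReal pt • Measure.dirac t + ENNReal.ofReal pp • Measure.dirac M with hμdef
  have hsum : pm + pt + pp = 1 := by rw [hpmdef]; ring
  have hprob : IsProbabilityMeasure μ := by
    constructor
    rw [hμdef]
    simp only [Measure.add_apply, Measure.smul_apply, smul_eq_mul, measure_univ, mul_one]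
    rw [← ENNReal.ofReal_add hpm0 hpt0, ← ENNReal.ofReal_add (by linarith) hpp0, hsum,
      ENNReal.ofReal_one]
  have hsupp : ∀ᵐ x ∂μ, x = -M ∨ x = θ * σ ^ 2 / M ∨ x = M := by
    rw [hμdef]
    refine ae_add_measure_iff.2 ⟨ae_add_measure_iff.2 ⟨?_, ?_⟩, ?_⟩ <;>
      [ refine Measure.ae_smul_measure ?_ (ENNReal.ofReal pm);
        refine Measure.ae_smul_measure ?_ (ENNReal.ofReal pt);
        refine Measure.ae_smul_measure ?_ (ENNReal.ofReal pp)] <;>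
      rw [ae_dirac_eq] <;> simp [ht]
  have key : ∀ f : ℝ → ℝ, ∫ x, f x ∂μ = pm * f (-M) + pt * f t + pp * f M := by
    intro f
    have h1 : Integrable f (ENNReal.ofReal pm • Measure.dirac (-M)) :=
      ((integrable_const (f (-M))).congr (ae_eq_dirac f).symm).smul_measure ENNReal.ofReal_ne_top
    have h2 : Integrable f (ENNReal.ofReal pt • Measure.dirac t) :=
      ((integrable_const (f t)).congr (ae_eq_dirac f).symm).smul_measure ENNReal.ofReal_ne_top
    have h3 : Integrable f (ENNReal.ofReal pp • Measure.dirac M) :=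
      ((integrable_const (f M)).congr (ae_eq_dirac f).symm).smul_measure ENNReal.ofReal_ne_top
    rw [hμdef, integral_add_measure (h1.add_measure h2) h3, integral_add_measure h1 h2,
      integral_smul_measure, integral_smul_measure, integral_smul_measure,
      integral_dirac, integral_dirac, integral_dirac,
      ENNReal.toReal_ofReal hpm0, ENNReal.toReal_ofReal hpt0, ENNReal.toReal_ofReal hpp0,
      smul_eq_mul, smul_eq_mul, smul_eq_mul]
  have hmean' : (∫ x, x ∂μ) = 0 := by
    rw [key (fun x => x)]; linear_combination hmean
  have hbound : ∀ᵐ x ∂μ, |x| ≤ M := by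
    filter_upwards [hsupp] with x hx
    rcases hx with h | h | h <;> subst h <;> rw [abs_le] <;> constructor <;>
      linarith
  refine ⟨μ, hprob, hsupp, hmean', ?_, hbound, ?_⟩
  · haveI := hprob
    have hmem : MemLp id 2 μ :=
      MemLp.of_bound aestronglyMeasurable_id M
        (by filter_upwards [hbound] with x hx; rwa [Real.norm_eq_abs])
    rw [variance_eq_sub hmem]
    have h2 : (∫ x, (id ^ 2) x ∂μ) = σ ^ 2 := by
      have := key (fun x => x ^ 2)
      simp only [Pi.pow_apply, id_eq]
      rw [this]
      linear_combination hvar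
    have h1 : (∫ x, id x ∂μ) = 0 := hmean'
    rw [h2, h1]
    ring
  · have hset : μ {x | θ * σ ^ 2 / M < x} = ENNReal.ofReal pp := by
      rw [hμdef]
      simp only [Measure.add_apply, Measure.smul_apply, smul_eq_mul,
        Measure.dirac_apply]
      rw [Set.indicator_apply, Set.indicator_apply, Set.indicator_apply]
      have h1 : ¬ ((-M : ℝ) ∈ {x : ℝ | θ * σ ^ 2 / M < x}) := by
        simp only [Set.mem_setOf_eq, not_lt, ← ht]; linarith
      have h2 : ¬ ((t : ℝ) ∈ {x : ℝ | θ * σ ^ 2 / M < x}) := by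
        simp only [Set.mem_setOf_eq, not_lt, ← ht]
        exact le_rfl
      have h3 : (M : ℝ) ∈ {x : ℝ | θ * σ ^ 2 / M < x} := by
        simp only [Set.mem_setOf_eq, ← ht]; exact htM
      rw [if_neg h1, if_neg h2, if_pos h3]
      simp
    rw [hset, ENNReal.toReal_ofReal hpp0, hppdef, div_eq_div_iff (by linarith) (by linarith)]
    ring
end

section
/- Let 0 < σ ≤ M. There exists a real random variable X (a two-atom distribution) such that E[X] = 0, Var(X) = σ², |X| ≤ M almost surely, and P(X > σ²/M) = 0. Consequently, for every threshold t ≥ σ²/M there is a mean-zero, variance-σ², [−M,M]-supported random variable with P(X > t) = 0. -/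
open MeasureTheory ProbabilityTheory

lemma integrable_dirac' {f : ℝ → ℝ} (a : ℝ) (hf : Measurable f) :
    Integrable f (Measure.dirac a) := by
  exact (integrable_const (f a)).congr (MeasureTheory.ae_eq_dirac' hf).symm

/-- **No anti-concentration beyond the threshold `σ²/M`.** For `0 < σ ≤ M` there is a
two-atom probability distribution on `ℝ` with mean `0`, variance `σ²`, support in `[−M,M]`,
and no mass strictly above `σ²/M`; consequently, for every `t ≥ σ²/M` there is a mean-zero,
variance-`σ²`, `[−M,M]`-supported random variable with `P(X > t) = 0`. -/
theorem no_anti_concentration_above_threshold (σ M : ℝ) (hσ : 0 < σ) (hσM : σ ≤ M) :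
    (∃ μ : Measure ℝ, IsProbabilityMeasure μ ∧
      (∀ᵐ x ∂μ, x = σ ^ 2 / M ∨ x = -M) ∧
      (∫ x, x ∂μ) = 0 ∧
      variance id μ = σ ^ 2 ∧
      (∀ᵐ x ∂μ, |x| ≤ M) ∧
      μ {x | σ ^ 2 / M < x} = 0) ∧
    ∀ t : ℝ, σ ^ 2 / M ≤ t →
      ∃ μ : Measure ℝ, IsProbabilityMeasure μ ∧
        (∫ x, x ∂μ) = 0 ∧
        variance id μ = σ ^ 2 ∧
        (∀ᵐ x ∂μ, |x| ≤ M) ∧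
        μ {x | t < x} = 0 := by
  have hM : 0 < M := lt_of_lt_of_le hσ hσM
  set a : ℝ := σ ^ 2 / M with ha
  set p : ℝ := M ^ 2 / (σ ^ 2 + M ^ 2) with hp
  have hden : 0 < σ ^ 2 + M ^ 2 := by positivity
  have hp0 : 0 < p := by positivity
  have hσ2 : 0 < σ ^ 2 := by positivity
  have hp1 : p < 1 := by
    rw [hp, div_lt_one hden]; linarith
  have hq0 : 0 < 1 - p := by linarith
  set μ : Measure ℝ := (ENNReal.ofReal p) • Measure.dirac a
      + (ENNReal.ofReal (1 - p)) • Measure.dirac (-M) with hμ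
  have hpne : ENNReal.ofReal p ≠ 0 := ne_of_gt (ENNReal.ofReal_pos.2 hp0)
  have hqne : ENNReal.ofReal (1 - p) ≠ 0 := ne_of_gt (ENNReal.ofReal_pos.2 hq0)
  have hprob : IsProbabilityMeasure μ := by
    constructor
    rw [hμ]
    simp only [Measure.coe_add, Pi.add_apply, Measure.coe_smul, Pi.smul_apply,
      Measure.dirac_apply_of_mem (Set.mem_univ _), smul_eq_mul, mul_one]
    rw [← ENNReal.ofReal_add hp0.le hq0.le]
    norm_num
  have hae : ∀ᵐ x ∂μ, x = a ∨ x = -M := by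
    rw [hμ, MeasureTheory.ae_add_measure_iff]
    constructor
    · refine Measure.ae_smul_measure ?_ _
      filter_upwards [MeasureTheory.ae_eq_dirac (id : ℝ → ℝ)] with x hx
      exact Or.inl hx
    · refine Measure.ae_smul_measure ?_ _
      filter_upwards [MeasureTheory.ae_eq_dirac (id : ℝ → ℝ)] with x hx
      exact Or.inr hx
  have haM : |a| ≤ M := by
    rw [abs_of_nonneg (by positivity)]
    rw [ha, div_le_iff₀ hM]
    nlinarith
  have hbound : ∀ᵐ x ∂μ, |x| ≤ M := by
    filter_upwards [hae] with x hx
    rcases hx with h | h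
    · rw [h]; exact haM
    · rw [h, abs_neg, abs_of_nonneg hM.le]
  -- integrals
  have hint : ∀ (f : ℝ → ℝ), Measurable f →
      (∫ x, f x ∂μ) = p * f a + (1 - p) * f (-M) := by
    intro f hf
    rw [hμ, integral_add_measure
        (((integrable_dirac' a hf)).smul_measure (by simp))
        (((integrable_dirac' (-M) hf)).smul_measure (by simp))]
    rw [integral_smul_measure, integral_smul_measure, integral_dirac, integral_dirac]
    rw [ENNReal.toReal_ofReal hp0.le, ENNReal.toReal_ofReal hq0.le]
    simp only [smul_eq_mul]
  have hmean : (∫ x, x ∂μ) = 0 := by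
    have := hint (fun x => x) measurable_id
    rw [this, hp, ha]
    field_simp
    ring
  have hsq : (∫ x, x ^ 2 ∂μ) = σ ^ 2 := by
    have := hint (fun x => x ^ 2) (by measurability)
    rw [this, hp, ha]
    field_simp
    ring
  have hmem : MemLp id 2 μ := by
    refine MemLp.of_bound aestronglyMeasurable_id M ?_
    filter_upwards [hbound] with x hx
    simpa using hx
  have hvar : variance id μ = σ ^ 2 := by
    rw [variance_eq_sub hmem]
    have h1 : (∫ x, id x ∂μ) = 0 := hmean
    have h2 : (∫ x, (id ^ 2 : ℝ → ℝ) x ∂μ) = σ ^ 2 := by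
      rw [← hsq]
      exact integral_congr_ae (Filter.Eventually.of_forall fun x => by simp [Pi.pow_apply])
    rw [h1, h2]; ring
  have hzero : μ {x | a < x} = 0 := by
    have h : ∀ᵐ x ∂μ, ¬ a < x := by
      filter_upwards [hae] with x hx
      rcases hx with h | h
      · simp [h]
      · rw [h, not_lt]
        have : (0:ℝ) ≤ a := by positivity
        linarith
    rw [ae_iff] at h
    simpa using h
  refine ⟨⟨μ, hprob, hae, hmean, hvar, hbound, hzero⟩, ?_⟩
  intro t ht
  refine ⟨μ, hprob, hmean, hvar, hbound, ?_⟩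
  refine measure_mono_null ?_ hzero
  intro x hx
  simp only [Set.mem_setOf_eq] at hx ⊢
  linarith
end

section
/- Let K be a real symmetric matrix indexed by a nonempty finite set whose eigenvalues all lie in [−M, M] for some M > 0, let (u_i) be an orthonormal eigenbasis of K with eigenvalues (λ_i), and let z be a unit vector with ⟨z, K z⟩ = 0 and s := ⟨z, K² z⟩ > 0. Then Σ_{i : λ_i > s/(2M)} ⟨u_i, z⟩² ≥ s/(4M²). -/
open Finset

/-- **Spectral mass corollary (θ = 1/2 of the anti-concentration bound).** Let `K` be a
real symmetric matrix on a nonempty finite index set whose eigenvalues all lie in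
`[−M, M]` with `M > 0`, with orthonormal eigenbasis `u` and eigenvalues `lam`, and let
`z` be a unit vector with `⟨z, K z⟩ = 0` and `s := ⟨z, K² z⟩ > 0`. Then the spectral mass
of `z` on eigenvalues `> s/(2M)` is at least `s/(4M²)`. -/
theorem spectral_mass_from_variance {ι : Type*} [Fintype ι] [Nonempty ι] [DecidableEq ι]
    (K : Matrix ι ι ℝ) (hKsym : K.IsSymm) (M : ℝ) (hM : 0 < M)
    (u : ι → ι → ℝ) (lam : ι → ℝ)
    (hortho : ∀ i j, dotProduct (u i) (u j) = if i = j then (1 : ℝ) else 0)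
    (heig : ∀ i, K.mulVec (u i) = lam i • u i)
    (hbound : ∀ i, |lam i| ≤ M)
    (z : ι → ℝ) (hz : dotProduct z z = 1)
    (hmean : dotProduct z (K.mulVec z) = 0)
    (s : ℝ) (hs : s = dotProduct z ((K * K).mulVec z)) (hspos : 0 < s) :
    s / (4 * M ^ 2) ≤
      ∑ i ∈ Finset.univ.filter (fun i => s / (2 * M) < lam i),
        (dotProduct (u i) z) ^ 2 := by
  classical
  set U : Matrix ι ι ℝ := Matrix.of u with hU
  set c : ι → ℝ := U.mulVec z with hc
  have hci : ∀ i, c i = dotProduct (u i) z := fun i => rfl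
  -- U has orthonormal rows
  have h1 : U * U.transpose = 1 := by
    ext i j
    simp only [Matrix.mul_apply, Matrix.transpose_apply, Matrix.one_apply]
    simpa [dotProduct, hU] using hortho i j
  have h2 : U.transpose * U = 1 := mul_eq_one_comm.mp h1
  -- K * Uᵀ = Uᵀ * D
  have hKU : K * U.transpose = U.transpose * Matrix.diagonal lam := by
    ext a j
    rw [Matrix.mul_diagonal]
    have := congrFun (heig j) a
    simp only [Matrix.mulVec, dotProduct, Pi.smul_apply, smul_eq_mul] at this
    show ∑ x, K a x * u j x = u j a * lam j
    rw [this]; ring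
  have hKdiag : K = U.transpose * Matrix.diagonal lam * U := by
    calc K = K * (U.transpose * U) := by rw [h2, Matrix.mul_one]
    _ = (K * U.transpose) * U := by rw [Matrix.mul_assoc]
    _ = U.transpose * Matrix.diagonal lam * U := by rw [hKU]
  -- key formula
  have key : ∀ f : ι → ℝ,
      dotProduct z ((U.transpose * Matrix.diagonal f * U).mulVec z)
        = ∑ i, f i * c i ^ 2 := by
    intro f
    have : (U.transpose * Matrix.diagonal f * U).mulVec z
        = U.transpose.mulVec ((Matrix.diagonal f).mulVec c) := by
      rw [hc, Matrix.mulVec_mulVec, Matrix.mulVec_mulVec]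
    rw [this, Matrix.dotProduct_mulVec, Matrix.vecMul_transpose, ← hc]
    simp only [dotProduct, Matrix.mulVec_diagonal]
    exact Finset.sum_congr rfl fun i _ => by ring
  -- three moment identities
  have e1 : ∑ i, c i ^ 2 = 1 := by
    have : (1 : Matrix ι ι ℝ) = U.transpose * Matrix.diagonal (fun _ => (1:ℝ)) * U := by
      rw [Matrix.diagonal_one, Matrix.mul_one, h2]
    have h := key (fun _ => 1)
    rw [← this] at h
    simpa [Matrix.one_mulVec, hz] using h.symm
  have e2 : ∑ i, lam i * c i ^ 2 = 0 := by
    rw [← key lam, ← hKdiag]; exact hmean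
  have e3 : ∑ i, lam i ^ 2 * c i ^ 2 = s := by
    have hKK : K * K = U.transpose * Matrix.diagonal (fun i => lam i * lam i) * U := by
      rw [hKdiag, ← Matrix.diagonal_mul_diagonal]
      calc U.transpose * Matrix.diagonal lam * U * (U.transpose * Matrix.diagonal lam * U)
          = U.transpose * Matrix.diagonal lam * (U * U.transpose) * Matrix.diagonal lam * U := by
            simp only [Matrix.mul_assoc]
        _ = U.transpose * (Matrix.diagonal lam * Matrix.diagonal lam) * U := by
            rw [h1]; simp only [Matrix.mul_one, Matrix.mul_assoc]
    have h := key (fun i => lam i * lam i)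
    rw [← hKK, ← hs] at h
    rw [h]
    exact Finset.sum_congr rfl fun i _ => by ring
  -- arithmetic part
  set t : ℝ := s / (2 * M) with ht
  have htpos : 0 < t := div_pos hspos (by positivity)
  set S : Finset ι := Finset.univ.filter (fun i => t < lam i) with hS
  set p : ℝ := ∑ i ∈ S, c i ^ 2 with hp
  set A : ℝ := ∑ i ∈ S, lam i * c i ^ 2 with hA
  have hp_nonneg : 0 ≤ p := Finset.sum_nonneg fun i _ => sq_nonneg _
  have hA_le : A ≤ M * p := by
    rw [hA, hp, Finset.mul_sum]
    refine Finset.sum_le_sum fun i _ => ?_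
    exact mul_le_mul_of_nonneg_right ((le_abs_self _).trans (hbound i)) (sq_nonneg _)
  have hsplit1 : A + ∑ i ∈ Finset.univ.filter (fun i => ¬ t < lam i), lam i * c i ^ 2 = 0 := by
    rw [hA, Finset.sum_filter_add_sum_filter_not]; exact e2
  have hsplit2 : p + ∑ i ∈ Finset.univ.filter (fun i => ¬ t < lam i), c i ^ 2 = 1 := by
    rw [hp, Finset.sum_filter_add_sum_filter_not]; exact e1
  have hsplit3 : (∑ i ∈ S, lam i ^ 2 * c i ^ 2)
      + ∑ i ∈ Finset.univ.filter (fun i => ¬ t < lam i), lam i ^ 2 * c i ^ 2 = s := by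
    rw [hS, Finset.sum_filter_add_sum_filter_not]; exact e3
  -- bound the high part
  have bound1 : ∑ i ∈ S, lam i ^ 2 * c i ^ 2 ≤ M * A := by
    rw [hA, Finset.mul_sum]
    refine Finset.sum_le_sum fun i hi => ?_
    have hil : t < lam i := by simpa [hS] using (Finset.mem_filter.mp hi).2
    have h0 : 0 ≤ lam i := le_of_lt (htpos.trans hil)
    have hM' : lam i ≤ M := (le_abs_self _).trans (hbound i)
    have h' : lam i * lam i ≤ M * lam i := mul_le_mul_of_nonneg_right hM' h0
    nlinarith [mul_le_mul_of_nonneg_right h' (sq_nonneg (c i))]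
  -- bound the low part pointwise: for lam ≤ t, lam² ≤ t·lam + M·(t − lam)
  have bound2 : ∑ i ∈ Finset.univ.filter (fun i => ¬ t < lam i), lam i ^ 2 * c i ^ 2
      ≤ ∑ i ∈ Finset.univ.filter (fun i => ¬ t < lam i),
          (t * lam i + M * (t - lam i)) * c i ^ 2 := by
    refine Finset.sum_le_sum fun i hi => ?_
    have hil : lam i ≤ t := not_lt.mp (by simpa using (Finset.mem_filter.mp hi).2)
    have hMl : -M ≤ lam i := neg_le_of_abs_le (hbound i)
    have hfact : (lam i - t) * (lam i + M) ≤ 0 :=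
      mul_nonpos_of_nonpos_of_nonneg (by linarith) (by linarith)
    nlinarith [sq_nonneg (c i)]
  have bound2' : ∑ i ∈ Finset.univ.filter (fun i => ¬ t < lam i),
      (t * lam i + M * (t - lam i)) * c i ^ 2
      = t * (-A) + M * t * (1 - p) - M * (-A) := by
    have hl : ∑ i ∈ Finset.univ.filter (fun i => ¬ t < lam i), lam i * c i ^ 2 = -A := by
      linarith
    have hcsum : ∑ i ∈ Finset.univ.filter (fun i => ¬ t < lam i), c i ^ 2 = 1 - p := by
      linarith
    rw [← hl, ← hcsum]
    simp only [Finset.mul_sum]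
    rw [← Finset.sum_add_distrib, ← Finset.sum_sub_distrib]
    refine Finset.sum_congr rfl fun i _ => by ring
  -- combine
  have hA_nonneg : 0 ≤ A := by
    refine Finset.sum_nonneg fun i hi => ?_
    have hil : t < lam i := by simpa [hS] using (Finset.mem_filter.mp hi).2
    exact mul_nonneg (le_of_lt (htpos.trans hil)) (sq_nonneg _)
  have hMt : M * t = s / 2 := by
    rw [ht]; field_simp
  have hfinal : s ≤ 2 * M * A + s / 2 := by
    have := bound2.trans_eq bound2'
    nlinarith [mul_nonneg (le_of_lt htpos) hA_nonneg, mul_nonneg (mul_nonneg hM.le htpos.le) hp_nonneg]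
  have : s ≤ 4 * M ^ 2 * p := by nlinarith
  rw [div_le_iff₀ (by positivity)]
  have hgoal : p = ∑ i ∈ Finset.univ.filter (fun i => s / (2 * M) < lam i),
      (dotProduct (u i) z) ^ 2 := by
    rw [hp, hS]; exact Finset.sum_congr (by rw [ht]) fun i _ => by rw [hci]
  linarith [hgoal ▸ this]
end

section
/- Fix natural numbers n, ℓ and an even k = 2j. For each k-element subset S of {1,…,n}, let A_S be the real matrix indexed by ℓ-element subsets of {1,…,n} with (U,V) entry equal to 1 if U △ V = S and 0 otherwise. Then Σ_{S ⊆ {1,…,n}, |S| = k} (A_S)² = C(ℓ, k/2)·C(n−ℓ, k/2) · I, where I is the identity matrix on ℓ-element subsets. -/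
open Finset

lemma card_symmDiff_finset {α : Type*} [DecidableEq α] (a b : Finset α) :
    (symmDiff a b).card = (a \ b).card + (b \ a).card := by
  rw [symmDiff_def]
  exact Finset.card_union_of_disjoint (disjoint_sdiff_sdiff)

lemma kikuchi_count (n ℓ j : ℕ) (U : Finset (Fin n)) (hU : U.card = ℓ) :
    (Finset.univ.filter (fun S : Finset (Fin n) =>
        S.card = 2 * j ∧ (symmDiff U S).card = ℓ)).card
      = ℓ.choose j * (n - ℓ).choose j := by
  have key : ∀ S : Finset (Fin n),
      (S.card = 2 * j ∧ (symmDiff U S).card = ℓ) ↔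
        ((S ∩ U).card = j ∧ (S \ U).card = j) := by
    intro S
    have h1 : (S ∩ U).card + (S \ U).card = S.card := Finset.card_inter_add_card_sdiff S U
    have h2 : (U ∩ S).card + (U \ S).card = U.card := Finset.card_inter_add_card_sdiff U S
    have h3 : (symmDiff U S).card = (U \ S).card + (S \ U).card := card_symmDiff_finset U S
    have h4 : (U ∩ S).card = (S ∩ U).card := by rw [Finset.inter_comm]
    omega
  have : (Finset.univ.filter (fun S : Finset (Fin n) =>
      S.card = 2 * j ∧ (symmDiff U S).card = ℓ)).card
      = ((U.powersetCard j) ×ˢ (Uᶜ.powersetCard j)).card := by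
    apply Finset.card_bij' (fun S _ => (S ∩ U, S \ U))
      (fun p _ => p.1 ∪ p.2)
    · intro S hS
      simp only [Finset.mem_filter, Finset.mem_univ, true_and, key] at hS
      simp only [Finset.mem_product, Finset.mem_powersetCard]
      refine ⟨⟨Finset.inter_subset_right, hS.1⟩, ⟨?_, hS.2⟩⟩
      intro x hx
      simp only [Finset.mem_sdiff] at hx
      simp [hx.2]
    · intro p hp
      simp only [Finset.mem_product, Finset.mem_powersetCard] at hp
      obtain ⟨⟨hT, hTc⟩, hR, hRc⟩ := hp
      have hdisj : Disjoint p.1 p.2 := by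
        refine Finset.disjoint_left.2 fun x hx1 hx2 => ?_
        have := hR hx2
        simp only [Finset.mem_compl] at this
        exact this (hT hx1)
      simp only [Finset.mem_filter, Finset.mem_univ, true_and, key]
      constructor
      · rw [Finset.union_inter_distrib_right]
        have e1 : p.1 ∩ U = p.1 := Finset.inter_eq_left.2 hT
        have e2 : p.2 ∩ U = ∅ := by
          refine Finset.eq_empty_of_forall_notMem fun x hx => ?_
          simp only [Finset.mem_inter] at hx
          have := hR hx.1
          simp only [Finset.mem_compl] at this
          exact this hx.2
        rw [e1, e2, Finset.union_empty, hTc]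
      · rw [Finset.union_sdiff_distrib]
        have e1 : p.1 \ U = ∅ := by
          rw [Finset.sdiff_eq_empty_iff_subset]; exact hT
        have e2 : p.2 \ U = p.2 := by
          rw [Finset.sdiff_eq_self_iff_disjoint]
          refine Finset.disjoint_left.2 fun x hx2 hxU => ?_
          have := hR hx2
          simp only [Finset.mem_compl] at this
          exact this hxU
        rw [e1, e2, Finset.empty_union, hRc]
    · intro S hS
      ext x
      simp only [Finset.mem_union, Finset.mem_inter, Finset.mem_sdiff]
      tauto
    · intro p hp
      simp only [Finset.mem_product, Finset.mem_powersetCard] at hp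
      obtain ⟨⟨hT, _⟩, hR, _⟩ := hp
      have e2 : p.2 ∩ U = ∅ := by
        refine Finset.eq_empty_of_forall_notMem fun x hx => ?_
        simp only [Finset.mem_inter] at hx
        have := hR hx.1
        simp only [Finset.mem_compl] at this
        exact this hx.2
      have e1 : p.1 ∩ U = p.1 := Finset.inter_eq_left.2 hT
      have e3 : p.1 \ U = ∅ := by rw [Finset.sdiff_eq_empty_iff_subset]; exact hT
      have e4 : p.2 \ U = p.2 := by
        rw [Finset.sdiff_eq_self_iff_disjoint]
        refine Finset.disjoint_left.2 fun x hx2 hxU => ?_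
        have := hR hx2
        simp only [Finset.mem_compl] at this
        exact this hxU
      rw [Finset.union_inter_distrib_right, Finset.union_sdiff_distrib, e1, e2, e3, e4,
        Finset.union_empty, Finset.empty_union]
  rw [this, Finset.card_product, Finset.card_powersetCard, Finset.card_powersetCard,
    hU, Finset.card_compl, Fintype.card_fin, hU]

/-- **Sum of squared single-entry Kikuchi matrices.** Fix `n`, `ℓ` and an even `k = 2j`.
For each `k`-subset `S` of `{1,…,n}`, let `A S` be the 0/1 matrix indexed by `ℓ`-subsets
with `(U,V)` entry `1` iff `U △ V = S`. Then
`Σ_{|S| = k} (A S)² = C(ℓ, k/2)·C(n−ℓ, k/2) · I`. -/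
theorem sum_sq_single_entry_kikuchi (n ℓ j : ℕ)
    (A : Finset (Fin n) →
      Matrix {U : Finset (Fin n) // U.card = ℓ} {U : Finset (Fin n) // U.card = ℓ} ℝ)
    (hA : ∀ S U V, A S U V = if symmDiff U.1 V.1 = S then (1 : ℝ) else 0) :
    ∑ S ∈ Finset.univ.filter (fun S : Finset (Fin n) => S.card = 2 * j), A S * A S
      = ((ℓ.choose j * (n - ℓ).choose j : ℕ) : ℝ) • (1 : Matrix _ _ ℝ) := by
  have entry : ∀ (S : Finset (Fin n)) (U V : {U : Finset (Fin n) // U.card = ℓ}),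
      (A S * A S) U V
        = if U = V ∧ (symmDiff U.1 S).card = ℓ then (1 : ℝ) else 0 := by
    intro S U V
    rw [Matrix.mul_apply]
    by_cases h : U = V ∧ (symmDiff U.1 S).card = ℓ
    · obtain ⟨hUV, hc⟩ := h
      rw [if_pos ⟨hUV, hc⟩]
      have hW0 : (symmDiff U.1 S).card = ℓ := hc
      rw [Fintype.sum_eq_single (⟨symmDiff U.1 S, hW0⟩ : {U : Finset (Fin n) // U.card = ℓ})]
      · rw [hA, hA]
        have e1 : symmDiff U.1 (symmDiff U.1 S) = S := symmDiff_symmDiff_cancel_left U.1 S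
        have e2 : symmDiff (symmDiff U.1 S) V.1 = S := by
          rw [← hUV, symmDiff_comm U.1 S, symmDiff_symmDiff_cancel_right]
        rw [if_pos e1, if_pos e2]; norm_num
      · intro W hW
        rw [hA, hA]
        have : symmDiff U.1 W.1 ≠ S := by
          intro hEq
          apply hW
          apply Subtype.ext
          show W.1 = symmDiff U.1 S
          rw [← hEq, symmDiff_symmDiff_cancel_left]
        rw [if_neg this, zero_mul]
    · rw [if_neg h]
      apply Finset.sum_eq_zero
      intro W _
      rw [hA, hA]
      by_cases h1 : symmDiff U.1 W.1 = S
      · by_cases h2 : symmDiff W.1 V.1 = S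
        · exfalso
          apply h
          have hW : W.1 = symmDiff U.1 S := by
            rw [← h1, symmDiff_symmDiff_cancel_left]
          have hV : V.1 = symmDiff W.1 S := by
            rw [← h2, symmDiff_symmDiff_cancel_left]
          have hUV : U = V := by
            apply Subtype.ext
            rw [hV, hW]
            exact (symmDiff_symmDiff_cancel_right S U.1).symm
          refine ⟨hUV, ?_⟩
          rw [← hW]; exact W.2
        · rw [if_neg h2, mul_zero]
      · rw [if_neg h1, zero_mul]
  ext U V
  rw [Matrix.sum_apply]
  simp only [entry]
  by_cases hUV : U = V
  · subst hUV
    simp only [true_and]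
    rw [Finset.sum_boole, Finset.filter_filter, kikuchi_count n ℓ j U.1 U.2]
    simp [Matrix.smul_apply, Matrix.one_apply]
  · simp only [hUV, false_and, if_false, Finset.sum_const_zero]
    simp [Matrix.smul_apply, Matrix.one_apply, hUV]
end

section
/- Fix natural numbers n, ℓ and an even positive k. Let T assign a real number T_S to every k-element subset S of {1,…,n}, and let 𝒦(T) be the real symmetric matrix indexed by ℓ-element subsets of {1,…,n} whose (U,V) entry is T_{U△V} if |U △ V| = k and 0 otherwise. Then for every x ∈ {−1,1}^n, writing x_W = ∏_{i∈W} x_i for W ⊆ {1,…,n}: Σ_{U,V : |U|=|V|=ℓ} x_U x_V [𝒦(T)]_{U,V} = C(k, k/2)·C(n−k, ℓ−k/2) · Σ_{S : |S|=k} T_S x_S. -/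
open Finset

private lemma sq_prod_one {n : ℕ} (x : Fin n → ℝ) (hx : ∀ i, x i = 1 ∨ x i = -1)
    (W : Finset (Fin n)) : (∏ i ∈ W, x i) * (∏ i ∈ W, x i) = 1 := by
  rw [← Finset.prod_mul_distrib]
  exact Finset.prod_eq_one fun i _ => by rcases hx i with h | h <;> rw [h] <;> norm_num

private lemma prod_symmDiff_eq {n : ℕ} (x : Fin n → ℝ) (hx : ∀ i, x i = 1 ∨ x i = -1)
    (U V : Finset (Fin n)) :
    (∏ i ∈ U, x i) * (∏ i ∈ V, x i) = ∏ i ∈ symmDiff U V, x i := by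
  have hd : Disjoint (symmDiff U V) (U ∩ V) := disjoint_symmDiff_inf U V
  have hu : symmDiff U V ∪ (U ∩ V) = U ∪ V := symmDiff_sup_inf U V
  calc (∏ i ∈ U, x i) * ∏ i ∈ V, x i
      = (∏ i ∈ U ∪ V, x i) * ∏ i ∈ U ∩ V, x i := (Finset.prod_union_inter).symm
    _ = ((∏ i ∈ symmDiff U V, x i) * ∏ i ∈ U ∩ V, x i) * ∏ i ∈ U ∩ V, x i := by
        rw [← hu, Finset.prod_union hd]
    _ = ∏ i ∈ symmDiff U V, x i := by
        rw [mul_assoc, sq_prod_one x hx, mul_one]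

private lemma card_symmDiff_add {n : ℕ} (U S : Finset (Fin n)) :
    (symmDiff U S).card + (U ∩ S).card + (U ∩ S).card = U.card + S.card := by
  have h1 : symmDiff U S = (U \ S) ∪ (S \ U) := symmDiff_def U S
  have h2 : Disjoint (U \ S) (S \ U) := disjoint_sdiff_sdiff
  have h3 : (U ∩ S).card + (U \ S).card = U.card := card_inter_add_card_sdiff U S
  have h4 : (S ∩ U).card + (S \ U).card = S.card := card_inter_add_card_sdiff S U
  rw [inter_comm] at h4
  rw [h1, card_union_of_disjoint h2]
  omega

private lemma count_lemma (n ℓ k : ℕ) (hkl : k / 2 ≤ ℓ) (S : Finset (Fin n))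
    (hS : S.card = k) :
    (Finset.univ.filter
        (fun U : Finset (Fin n) => U.card = ℓ ∧ (U ∩ S).card = k / 2)).card
      = k.choose (k / 2) * (n - k).choose (ℓ - k / 2) := by
  have hSc : Sᶜ.card = n - k := by rw [card_compl, hS, Fintype.card_fin]
  have hcard : ((S.powersetCard (k / 2)) ×ˢ (Sᶜ.powersetCard (ℓ - k / 2))).card
      = k.choose (k / 2) * (n - k).choose (ℓ - k / 2) := by
    rw [card_product, card_powersetCard, card_powersetCard, hS, hSc]
  rw [← hcard]
  apply Finset.card_nbij' (i := fun U => (U ∩ S, U \ S))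
    (j := fun p => p.1 ∪ p.2)
  · intro U hU
    simp only [mem_coe, mem_filter, mem_univ, true_and] at hU
    obtain ⟨hU1, hU2⟩ := hU
    simp only [mem_coe, mem_product, mem_powersetCard]
    refine ⟨⟨inter_subset_right, hU2⟩, ?_, ?_⟩
    · intro a ha
      simp only [mem_sdiff] at ha
      simp [ha.2]
    · have := card_inter_add_card_sdiff U S
      omega
  · intro p hp
    simp only [mem_coe, mem_product, mem_powersetCard] at hp
    obtain ⟨⟨h1, h2⟩, h3, h4⟩ := hp
    have hd : Disjoint p.1 p.2 := by
      apply Finset.disjoint_left.2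
      intro a ha1 ha2
      have : a ∈ Sᶜ := h3 ha2
      simp only [mem_compl] at this
      exact this (h1 ha1)
    simp only [mem_coe, mem_filter, mem_univ, true_and]
    constructor
    · rw [card_union_of_disjoint hd, h2, h4]; omega
    · have hi : (p.1 ∪ p.2) ∩ S = p.1 := by
        rw [union_inter_distrib_right, inter_eq_left.2 h1]
        have : p.2 ∩ S = ∅ := by
          apply Finset.eq_empty_of_forall_notMem
          intro a ha
          simp only [mem_inter] at ha
          have : a ∈ Sᶜ := h3 ha.1
          simp only [mem_compl] at this
          exact this ha.2
        rw [this, union_empty]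
      rw [hi, h2]
  · intro U hU
    simp only
    rw [union_comm, sdiff_union_inter]
  · intro p hp
    simp only [mem_coe, mem_product, mem_powersetCard] at hp
    obtain ⟨⟨h1, h2⟩, h3, h4⟩ := hp
    have hi : (p.1 ∪ p.2) ∩ S = p.1 := by
      rw [union_inter_distrib_right, inter_eq_left.2 h1]
      have : p.2 ∩ S = ∅ := by
        apply Finset.eq_empty_of_forall_notMem
        intro a ha
        simp only [mem_inter] at ha
        have : a ∈ Sᶜ := h3 ha.1
        simp only [mem_compl] at this
        exact this ha.2
      rw [this, union_empty]
    have hs : (p.1 ∪ p.2) \ S = p.2 := by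
      rw [union_sdiff_distrib, sdiff_eq_empty_iff_subset.2 h1, empty_union]
      apply sdiff_eq_self_of_disjoint
      apply Finset.disjoint_left.2
      intro a ha2 haS
      have : a ∈ Sᶜ := h3 ha2
      simp only [mem_compl] at this
      exact this haS
    simp only [hi, hs]

/-- **Kikuchi quadratic form of a sign vector.** Fix `n`, `ℓ` and an even positive `k` with
`k/2 ≤ ℓ`. Let `T` assign a real number to every subset of `{1,…,n}` (only `k`-subsets
matter), and let the order-`ℓ` Kikuchi matrix have `(U,V)` entry `T (U △ V)` if
`|U △ V| = k` and `0` otherwise. Then for every `x ∈ {−1,1}ⁿ`, with `x_W = ∏_{i∈W} x i`,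
`Σ_{|U|=|V|=ℓ} x_U x_V 𝒦_{U,V} = C(k,k/2)·C(n−k, ℓ−k/2) · Σ_{|S|=k} T_S x_S`. -/
theorem kikuchi_quadratic_form_signs (n ℓ k : ℕ) (hk : 0 < k) (hke : Even k)
    (hkl : k / 2 ≤ ℓ)
    (T : Finset (Fin n) → ℝ) (x : Fin n → ℝ) (hx : ∀ i, x i = 1 ∨ x i = -1) :
    ∑ U ∈ Finset.univ.filter (fun U : Finset (Fin n) => U.card = ℓ),
      ∑ V ∈ Finset.univ.filter (fun V : Finset (Fin n) => V.card = ℓ),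
        (∏ i ∈ U, x i) * (∏ i ∈ V, x i) *
          (if (symmDiff U V).card = k then T (symmDiff U V) else 0)
      = ((k.choose (k / 2) * (n - k).choose (ℓ - k / 2) : ℕ) : ℝ) *
          ∑ S ∈ Finset.univ.filter (fun S : Finset (Fin n) => S.card = k),
            T S * ∏ i ∈ S, x i := by
  have hk2 : k / 2 + k / 2 = k := by
    obtain ⟨m, hm⟩ := hke; omega
  set F : Finset (Fin n) → ℝ :=
    fun S => if S.card = k then T S * ∏ i ∈ S, x i else 0 with hF
  -- Step 1: rewrite the summand using x_U x_V = x_{U △ V}.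
  have step1 : ∀ U V : Finset (Fin n),
      (∏ i ∈ U, x i) * (∏ i ∈ V, x i) *
        (if (symmDiff U V).card = k then T (symmDiff U V) else 0)
      = F (symmDiff U V) := by
    intro U V
    rw [prod_symmDiff_eq x hx]
    simp only [hF]
    split <;> ring
  simp only [step1]
  -- Step 2: reindex the inner sum by S = U △ V.
  have step2 : ∀ U ∈ Finset.univ.filter (fun U : Finset (Fin n) => U.card = ℓ),
      ∑ V ∈ Finset.univ.filter (fun V : Finset (Fin n) => V.card = ℓ),
          F (symmDiff U V)
        = ∑ S ∈ Finset.univ.filter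
            (fun S : Finset (Fin n) => (symmDiff U S).card = ℓ), F S := by
    intro U _
    apply Finset.sum_nbij' (i := fun V => symmDiff U V) (j := fun S => symmDiff U S)
    · intro V hV
      simp only [mem_filter, mem_univ, true_and] at hV ⊢
      rw [symmDiff_symmDiff_cancel_left]
      exact hV
    · intro S hS
      simp only [mem_filter, mem_univ, true_and] at hS ⊢
      exact hS
    · intro V _; exact symmDiff_symmDiff_cancel_left U V
    · intro S _; exact symmDiff_symmDiff_cancel_left U S
    · intro V _; rfl
  rw [Finset.sum_congr rfl step2]
  -- Step 3: swap sums and collect the coefficient of each `S`.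
  have step3 :
      ∑ U ∈ Finset.univ.filter (fun U : Finset (Fin n) => U.card = ℓ),
          ∑ S ∈ Finset.univ.filter
            (fun S : Finset (Fin n) => (symmDiff U S).card = ℓ), F S
        = ∑ S : Finset (Fin n),
            (((Finset.univ.filter (fun U : Finset (Fin n) => U.card = ℓ)).filter
              (fun U => (symmDiff U S).card = ℓ)).card : ℝ) * F S := by
    have h1 : ∀ U : Finset (Fin n),
        ∑ S ∈ Finset.univ.filter
            (fun S : Finset (Fin n) => (symmDiff U S).card = ℓ), F S
          = ∑ S : Finset (Fin n), if (symmDiff U S).card = ℓ then F S else 0 :=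
      fun U => Finset.sum_filter _ _
    rw [Finset.sum_congr rfl fun U _ => h1 U, Finset.sum_comm]
    apply Finset.sum_congr rfl
    intro S _
    rw [← Finset.sum_filter, Finset.sum_const, nsmul_eq_mul]
  rw [step3]
  -- Step 4: for each `S` of size `k`, the coefficient is the binomial count.
  have step4 : ∀ S : Finset (Fin n),
      (((Finset.univ.filter (fun U : Finset (Fin n) => U.card = ℓ)).filter
          (fun U => (symmDiff U S).card = ℓ)).card : ℝ) * F S
        = if S.card = k
            then ((k.choose (k / 2) * (n - k).choose (ℓ - k / 2) : ℕ) : ℝ)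
              * (T S * ∏ i ∈ S, x i)
            else 0 := by
    intro S
    by_cases hS : S.card = k
    · have hfe : (Finset.univ.filter (fun U : Finset (Fin n) => U.card = ℓ)).filter
          (fun U => (symmDiff U S).card = ℓ)
          = Finset.univ.filter
              (fun U : Finset (Fin n) => U.card = ℓ ∧ (U ∩ S).card = k / 2) := by
        rw [Finset.filter_filter]
        apply Finset.filter_congr
        intro U _
        have h := card_symmDiff_add U S
        constructor
        · rintro ⟨h1, h2⟩
          exact ⟨h1, by omega⟩
        · rintro ⟨h1, h2⟩
          exact ⟨h1, by omega⟩
      rw [hfe, count_lemma n ℓ k hkl S hS, hF]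
      simp only [hS, if_true]
    · rw [hF]
      simp only [hS, if_false, mul_zero]
  rw [Finset.sum_congr rfl (fun S _ => step4 S), ← Finset.sum_filter, Finset.mul_sum]
end

section
/- Fix natural numbers n, ℓ with 1 ≤ ℓ ≤ n and an even positive k. Let T assign a real number T_S to every k-element subset S of {1,…,n}, and let 𝒦(T) be the real symmetric matrix indexed by ℓ-element subsets of {1,…,n} whose (U,V) entry is T_{U△V} if |U △ V| = k and 0 otherwise. Then for every x ∈ {−1,1}^n, the maximum eigenvalue of 𝒦(T) satisfies λ_max(𝒦(T)) ≥ δ_{n,k,ℓ} · Σ_{S : |S|=k} T_S x_S, where δ_{n,k,ℓ} = C(k, k/2)·C(n−k, ℓ−k/2)/C(n, ℓ). -/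
set_option maxHeartbeats 1000000
open Finset Matrix

section helpers
variable {n ℓ k : ℕ}

lemma rayleigh_aux {m : Type*} [Fintype m] [DecidableEq m] [Nonempty m]
    (A : Matrix m m ℝ) (hA : A.IsHermitian) (v : m → ℝ) :
    v ⬝ᵥ A *ᵥ v ≤ (⨆ i, hA.eigenvalues i) * (v ⬝ᵥ v) := by
  set U : Matrix m m ℝ := (hA.eigenvectorUnitary : Matrix m m ℝ) with hU
  set w : m → ℝ := star U *ᵥ v with hw
  have hUU : U * star U = 1 := (Matrix.mem_unitaryGroup_iff).mp hA.eigenvectorUnitary.2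
  have hT : ∀ y : m → ℝ, v ⬝ᵥ (U *ᵥ y) = w ⬝ᵥ y := by
    intro y
    rw [Matrix.dotProduct_mulVec, hw]
    congr 1
    funext i
    simp [Matrix.mulVec, Matrix.vecMul, dotProduct, Matrix.star_apply, mul_comm]
  have hD : Matrix.diagonal (RCLike.ofReal ∘ hA.eigenvalues) = Matrix.diagonal hA.eigenvalues := by
    norm_num
  have hAv : A *ᵥ v = U *ᵥ (Matrix.diagonal hA.eigenvalues *ᵥ w) := by
    conv_lhs => rw [hA.spectral_theorem]
    rw [hD, hw, Unitary.conjStarAlgAut_apply, ← Matrix.mulVec_mulVec, ← Matrix.mulVec_mulVec]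
  have key : v ⬝ᵥ A *ᵥ v = ∑ i, hA.eigenvalues i * (w i * w i) := by
    rw [hAv, hT]
    simp only [dotProduct, Matrix.mulVec_diagonal]
    exact Finset.sum_congr rfl fun i _ => by ring
  have hvv : v ⬝ᵥ v = ∑ i, w i * w i := by
    have h1 : v ⬝ᵥ v = v ⬝ᵥ ((U * star U) *ᵥ v) := by rw [hUU, Matrix.one_mulVec]
    rw [h1, ← Matrix.mulVec_mulVec, hT, hw]
    simp [dotProduct]
  rw [key, hvv, Finset.mul_sum]
  apply Finset.sum_le_sum
  intro i _
  exact mul_le_mul_of_nonneg_right (le_ciSup (Set.Finite.bddAbove (Set.finite_range _)) i)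
    (mul_self_nonneg _)

lemma fiber_card (n ℓ k : ℕ) (hke : Even k) (hkl : k / 2 ≤ ℓ)
    (S : Finset (Fin n)) (hS : S.card = k) :
    (Finset.univ.filter (fun p : {U : Finset (Fin n) // U.card = ℓ} ×
        {U : Finset (Fin n) // U.card = ℓ} => symmDiff p.1.1 p.2.1 = S)).card
      = k.choose (k / 2) * (n - k).choose (ℓ - k / 2) := by
  have hk2 : k / 2 + k / 2 = k := by obtain ⟨r, hr⟩ := hke; omega
  have step1 : (Finset.univ.filter (fun p : {U : Finset (Fin n) // U.card = ℓ} ×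
        {U : Finset (Fin n) // U.card = ℓ} => symmDiff p.1.1 p.2.1 = S)).card
      = (Finset.univ.filter (fun p : Finset (Fin n) × Finset (Fin n) =>
          p.1.card = ℓ ∧ p.2.card = ℓ ∧ symmDiff p.1 p.2 = S)).card := by
    apply Finset.card_nbij (i := fun p => (p.1.1, p.2.1))
    · rintro ⟨⟨U, hU⟩, ⟨V, hV⟩⟩ hp
      simp only [Finset.mem_coe, Finset.mem_filter, Finset.mem_univ, true_and] at hp ⊢
      exact ⟨hU, hV, hp⟩
    · rintro ⟨⟨U, hU⟩, ⟨V, hV⟩⟩ - ⟨⟨U', hU'⟩, ⟨V', hV'⟩⟩ - h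
      simp only [Prod.mk.injEq] at h
      simp [Prod.ext_iff, Subtype.ext_iff, h.1, h.2]
    · rintro ⟨U, V⟩ hp
      simp only [Finset.coe_filter, Finset.mem_univ, true_and, Set.mem_setOf_eq] at hp ⊢
      obtain ⟨hU, hV, hUV⟩ := hp
      exact ⟨(⟨U, hU⟩, ⟨V, hV⟩), by simpa using hUV, rfl⟩
  rw [step1]
  rw [show k.choose (k/2) * (n-k).choose (ℓ - k/2)
      = ((S.powersetCard (k/2)) ×ˢ (Sᶜ.powersetCard (ℓ - k/2))).card by
    rw [Finset.card_product, Finset.card_powersetCard, Finset.card_powersetCard,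
      Finset.card_compl, Fintype.card_fin, hS]]
  apply Finset.card_nbij' (i := fun p => (p.1 ∩ S, p.1 \ S))
    (j := fun q => (q.1 ∪ q.2, (S \ q.1) ∪ q.2))
  · -- hi
    rintro ⟨U, V⟩ hp
    dsimp only
    simp only [Finset.mem_coe, Finset.mem_filter, Finset.mem_univ, true_and] at hp
    obtain ⟨hU, hV, hp⟩ := hp
    have hmem : ∀ i, i ∈ S ↔ (i ∈ U ∧ i ∉ V ∨ i ∈ V ∧ i ∉ U) := by
      intro i; rw [← hp]; exact Finset.mem_symmDiff
    have e1 : (U ∩ S).card + (U \ S).card = ℓ := by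
      rw [Finset.card_inter_add_card_sdiff, hU]
    have hVS : V ∩ S = S \ U := by
      ext i; have := hmem i
      simp only [Finset.mem_inter, Finset.mem_sdiff]; tauto
    have hVs : V \ S = U \ S := by
      ext i; have := hmem i
      simp only [Finset.mem_sdiff]; tauto
    have e2 : (V ∩ S).card + (V \ S).card = ℓ := by
      rw [Finset.card_inter_add_card_sdiff, hV]
    have e3 : (S \ U).card + (S ∩ U).card = k := by
      rw [Finset.card_sdiff_add_card_inter, hS]
    rw [hVS, hVs] at e2
    rw [Finset.inter_comm S U] at e3
    have hcard : (U ∩ S).card = k / 2 := by omega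
    refine Finset.mem_product.mpr ⟨Finset.mem_powersetCard.mpr
      ⟨Finset.inter_subset_right, hcard⟩, Finset.mem_powersetCard.mpr
      ⟨fun i hi => Finset.mem_compl.mpr (Finset.mem_sdiff.mp hi).2,
       show (U \ S).card = ℓ - k / 2 by omega⟩⟩
  · -- hj
    rintro ⟨A, B⟩ hq
    simp only [Finset.mem_coe, Finset.mem_product, Finset.mem_powersetCard] at hq
    obtain ⟨⟨hA, hAc⟩, hB, hBc⟩ := hq
    have hBS : ∀ i, i ∈ B → i ∉ S := fun i h => Finset.mem_compl.mp (hB h)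
    have hdAB : Disjoint A B := Finset.disjoint_left.mpr (fun i hi hj => hBS i hj (hA hi))
    have hdSB : Disjoint (S \ A) B :=
      Finset.disjoint_left.mpr (fun i hi hj => hBS i hj (Finset.mem_sdiff.mp hi).1)
    simp only [Finset.mem_coe, Finset.mem_filter, Finset.mem_univ, true_and]
    refine ⟨?_, ?_, ?_⟩
    · rw [Finset.card_union_of_disjoint hdAB, hAc, hBc]; omega
    · rw [Finset.card_union_of_disjoint hdSB, Finset.card_sdiff_of_subset hA, hAc, hBc, hS]; omega
    · ext i
      have h1 : i ∈ A → i ∈ S := fun h => hA h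
      have h2 := hBS i
      simp only [Finset.mem_symmDiff, Finset.mem_union, Finset.mem_sdiff]
      tauto
  · -- left_inv
    rintro ⟨U, V⟩ hp
    simp only [Finset.mem_coe, Finset.mem_filter, Finset.mem_univ, true_and] at hp
    obtain ⟨hU, hV, hp⟩ := hp
    have hmem : ∀ i, i ∈ S ↔ (i ∈ U ∧ i ∉ V ∨ i ∈ V ∧ i ∉ U) := by
      intro i; rw [← hp]; exact Finset.mem_symmDiff
    rw [Prod.ext_iff]
    constructor
    · show (U ∩ S) ∪ (U \ S) = U
      ext i; simp only [Finset.mem_union, Finset.mem_inter, Finset.mem_sdiff]; tauto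
    · show (S \ (U ∩ S)) ∪ (U \ S) = V
      ext i; have := hmem i
      simp only [Finset.mem_union, Finset.mem_inter, Finset.mem_sdiff]; tauto
  · -- right_inv
    rintro ⟨A, B⟩ hq
    simp only [Finset.mem_coe, Finset.mem_product, Finset.mem_powersetCard] at hq
    obtain ⟨⟨hA, hAc⟩, hB, hBc⟩ := hq
    have hAS : ∀ i, i ∈ A → i ∈ S := fun i h => hA h
    have hBS : ∀ i, i ∈ B → i ∉ S := fun i h => Finset.mem_compl.mp (hB h)
    rw [Prod.ext_iff]
    constructor
    · show (A ∪ B) ∩ S = A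
      ext i; have h1 := hAS i; have h2 := hBS i
      simp only [Finset.mem_inter, Finset.mem_union]; tauto
    · show (A ∪ B) \ S = B
      ext i; have h1 := hAS i; have h2 := hBS i
      simp only [Finset.mem_sdiff, Finset.mem_union]; tauto

lemma prod_symmDiff_aux (x : Fin n → ℝ) (hx2 : ∀ i, x i * x i = 1)
    (U V : Finset (Fin n)) :
    (∏ i ∈ U, x i) * ∏ i ∈ V, x i = ∏ i ∈ symmDiff U V, x i := by
  have hU : U = (U \ V) ∪ (U ∩ V) := by
    ext i; simp only [Finset.mem_union, Finset.mem_sdiff, Finset.mem_inter]; tauto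
  have hV : V = (V \ U) ∪ (U ∩ V) := by
    ext i; simp only [Finset.mem_union, Finset.mem_sdiff, Finset.mem_inter]; tauto
  have hdU : Disjoint (U \ V) (U ∩ V) := by
    rw [Finset.disjoint_left]; intro i hi hj
    exact (Finset.mem_sdiff.mp hi).2 (Finset.mem_inter.mp hj).2
  have hdV : Disjoint (V \ U) (U ∩ V) := by
    rw [Finset.disjoint_left]; intro i hi hj
    exact (Finset.mem_sdiff.mp hi).2 (Finset.mem_inter.mp hj).1
  have hdS : Disjoint (U \ V) (V \ U) := by
    rw [Finset.disjoint_left]; intro i hi hj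
    exact (Finset.mem_sdiff.mp hj).2 (Finset.mem_sdiff.mp hi).1
  have hsd : symmDiff U V = (U \ V) ∪ (V \ U) := by
    ext i
    simp only [Finset.mem_symmDiff, Finset.mem_union, Finset.mem_sdiff]
  have pU : ∏ i ∈ U, x i = (∏ i ∈ U \ V, x i) * ∏ i ∈ U ∩ V, x i := by
    rw [← Finset.prod_union hdU]; exact Finset.prod_congr hU (fun _ _ => rfl)
  have pV : ∏ i ∈ V, x i = (∏ i ∈ V \ U, x i) * ∏ i ∈ U ∩ V, x i := by
    rw [← Finset.prod_union hdV]; exact Finset.prod_congr hV (fun _ _ => rfl)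
  rw [hsd, Finset.prod_union hdS, pU, pV]
  have : (∏ i ∈ U ∩ V, x i) * ∏ i ∈ U ∩ V, x i = 1 := by
    rw [← Finset.prod_mul_distrib]
    exact Finset.prod_congr rfl (fun i _ => hx2 i) |>.trans (Finset.prod_const_one)
  calc ((∏ i ∈ U \ V, x i) * ∏ i ∈ U ∩ V, x i) * ((∏ i ∈ V \ U, x i) * ∏ i ∈ U ∩ V, x i)
      = ((∏ i ∈ U \ V, x i) * ∏ i ∈ V \ U, x i) *
        ((∏ i ∈ U ∩ V, x i) * ∏ i ∈ U ∩ V, x i) := by ring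
    _ = (∏ i ∈ U \ V, x i) * ∏ i ∈ V \ U, x i := by rw [this, mul_one]

end helpers

/-- **A planted tensor yields a large Kikuchi eigenvalue.** Fix `1 ≤ ℓ ≤ n` and an even
positive `k` with `k/2 ≤ ℓ`. Let `𝒦` be the order-`ℓ` Kikuchi matrix of the `k`-tensor
with entries `T`, i.e. `(U,V)` entry `T (U △ V)` if `|U △ V| = k` else `0` (a symmetric
matrix). Then for every `x ∈ {−1,1}ⁿ`, the maximum eigenvalue of `𝒦` is at least
`δ_{n,k,ℓ} · Σ_{|S|=k} T_S x_S`, with `δ_{n,k,ℓ} = C(k,k/2)·C(n−k,ℓ−k/2)/C(n,ℓ)`. -/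
theorem kikuchi_max_eigenvalue_lower_bound (n ℓ k : ℕ) (hl1 : 1 ≤ ℓ) (hln : ℓ ≤ n)
    (hk : 0 < k) (hke : Even k) (hkl : k / 2 ≤ ℓ)
    (T : Finset (Fin n) → ℝ)
    (K : Matrix {U : Finset (Fin n) // U.card = ℓ} {U : Finset (Fin n) // U.card = ℓ} ℝ)
    (hK : ∀ U V, K U V =
      if (symmDiff U.1 V.1).card = k then T (symmDiff U.1 V.1) else 0)
    (hKh : K.IsHermitian)
    (x : Fin n → ℝ) (hx : ∀ i, x i = 1 ∨ x i = -1) :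
    ((k.choose (k / 2) * (n - k).choose (ℓ - k / 2) : ℕ) : ℝ) / ((n.choose ℓ : ℕ) : ℝ) *
        ∑ S ∈ Finset.univ.filter (fun S : Finset (Fin n) => S.card = k),
          T S * ∏ i ∈ S, x i
      ≤ ⨆ i, hKh.eigenvalues i := by
  classical
  have hx2 : ∀ i, x i * x i = 1 := fun i => by rcases hx i with h | h <;> rw [h] <;> norm_num
  have hm : Nonempty {U : Finset (Fin n) // U.card = ℓ} := by
    obtain ⟨t, -, ht⟩ := Finset.exists_subset_card_eq (s := (Finset.univ : Finset (Fin n))) (n := ℓ)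
      (by simpa using hln)
    exact ⟨⟨t, ht⟩⟩
  have hcardm : (Fintype.card {U : Finset (Fin n) // U.card = ℓ} : ℝ) = (n.choose ℓ : ℝ) := by
    rw [Fintype.card_finset_len, Fintype.card_fin]
  set v : {U : Finset (Fin n) // U.card = ℓ} → ℝ := fun U => ∏ i ∈ U.1, x i with hv
  -- squared norm
  have hvv : v ⬝ᵥ v = (n.choose ℓ : ℝ) := by
    rw [← hcardm]
    simp only [dotProduct, hv]
    rw [Finset.sum_congr rfl (fun U _ => ?_), Finset.sum_const, Fintype.card, nsmul_eq_mul,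
      mul_one]
    rw [← Finset.prod_mul_distrib]
    exact (Finset.prod_congr rfl fun i _ => hx2 i).trans Finset.prod_const_one
  -- quadratic form
  set F : Finset (Fin n) → ℝ := fun S => if S.card = k then T S * ∏ i ∈ S, x i else 0 with hF
  have hquad : v ⬝ᵥ K *ᵥ v = ∑ p : {U : Finset (Fin n) // U.card = ℓ} × {U : Finset (Fin n) // U.card = ℓ}, F (symmDiff p.1.1 p.2.1) := by
    rw [Fintype.sum_prod_type]
    simp only [dotProduct, Matrix.mulVec, dotProduct, Finset.mul_sum]
    refine Finset.sum_congr rfl fun U _ => Finset.sum_congr rfl fun V _ => ?_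
    rw [hK U V, hF]
    by_cases h : (symmDiff U.1 V.1).card = k
    · simp only [h, if_true]
      rw [show v U * (T (symmDiff U.1 V.1) * v V)
          = T (symmDiff U.1 V.1) * (v U * v V) by ring, hv]
      rw [prod_symmDiff_aux x hx2 U.1 V.1]
    · simp [h]
  have hfib : ∑ p : {U : Finset (Fin n) // U.card = ℓ} × {U : Finset (Fin n) // U.card = ℓ}, F (symmDiff p.1.1 p.2.1)
      = ∑ S : Finset (Fin n),
          ((Finset.univ.filter (fun p : {U : Finset (Fin n) // U.card = ℓ} × {U : Finset (Fin n) // U.card = ℓ} => symmDiff p.1.1 p.2.1 = S)).card : ℝ) * F S := by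
    rw [← Finset.sum_fiberwise (Finset.univ : Finset ({U : Finset (Fin n) // U.card = ℓ} × {U : Finset (Fin n) // U.card = ℓ}))
      (fun p => symmDiff p.1.1 p.2.1) (fun p => F (symmDiff p.1.1 p.2.1))]
    refine Finset.sum_congr rfl fun S _ => ?_
    rw [Finset.sum_congr rfl (fun p hp => by
      rw [(Finset.mem_filter.mp hp).2]), Finset.sum_const, nsmul_eq_mul]
  have hcount : ∑ S : Finset (Fin n),
        ((Finset.univ.filter (fun p : {U : Finset (Fin n) // U.card = ℓ} × {U : Finset (Fin n) // U.card = ℓ} => symmDiff p.1.1 p.2.1 = S)).card : ℝ) * F S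
      = ((k.choose (k / 2) * (n - k).choose (ℓ - k / 2) : ℕ) : ℝ) *
          ∑ S ∈ Finset.univ.filter (fun S : Finset (Fin n) => S.card = k),
            T S * ∏ i ∈ S, x i := by
    rw [Finset.mul_sum]
    rw [← Finset.sum_filter_of_ne (p := fun S : Finset (Fin n) => S.card = k)
      (f := fun S => ((Finset.univ.filter
        (fun p : {U : Finset (Fin n) // U.card = ℓ} × {U : Finset (Fin n) // U.card = ℓ} => symmDiff p.1.1 p.2.1 = S)).card : ℝ) * F S)
      (by
        intro S _ hne
        by_contra h
        exact hne (by simp only [hF]; simp [h]))]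
    refine Finset.sum_congr rfl fun S hS => ?_
    have hSk : S.card = k := (Finset.mem_filter.mp hS).2
    rw [fiber_card n ℓ k hke hkl S hSk, hF]
    simp only [hSk, if_true]
  have hray := rayleigh_aux K hKh v
  rw [hquad, hfib, hcount, hvv] at hray
  have hpos : (0 : ℝ) < (n.choose ℓ : ℝ) := by
    exact_mod_cast Nat.choose_pos hln
  rw [div_mul_eq_mul_div, div_le_iff₀ hpos]
  linarith [hray]
end

section
/- Let n, ℓ be natural numbers with ℓ ≤ n, and let v be a real vector indexed by the ℓ-element subsets of {1,…,n} with Σ_U v_U² = 1. Define the voting matrix V(v) ∈ ℝ^{n×n} by V_{ij} = Σ_{U,T} v_U v_T · 1(U △ T = {i,j}) for i ≠ j, and V_{ii} = 0. Then the matrix (I_n + V(v))/n is positive semidefinite and has trace 1. -/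
open Finset

/-- **The voting matrix yields a density matrix.** Let `v` be a unit vector indexed by the
`ℓ`-element subsets of `{1,…,n}` and let `V` be the voting matrix with `V_{ii} = 0` and
`V_{ij} = Σ_{U,T} v_U v_T · 1(U △ T = {i,j})` for `i ≠ j`. Then `(I + V)/n` is positive
semidefinite with trace `1`. -/
theorem voting_matrix_density (n ℓ : ℕ) (hn : 0 < n) (hln : ℓ ≤ n)
    (v : Finset (Fin n) → ℝ)
    (hv : ∑ U ∈ Finset.univ.filter (fun U : Finset (Fin n) => U.card = ℓ), (v U) ^ 2 = 1)
    (V : Matrix (Fin n) (Fin n) ℝ)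
    (hVdiag : ∀ i, V i i = 0)
    (hVoff : ∀ i j, i ≠ j → V i j =
      ∑ U ∈ Finset.univ.filter (fun U : Finset (Fin n) => U.card = ℓ),
        ∑ T ∈ Finset.univ.filter (fun T : Finset (Fin n) => T.card = ℓ),
          v U * v T * (if symmDiff U T = {i, j} then (1 : ℝ) else 0)) :
    Matrix.PosSemidef ((n : ℝ)⁻¹ • (1 + V)) ∧
      Matrix.trace ((n : ℝ)⁻¹ • (1 + V)) = 1 := by
  set v' : Finset (Fin n) → ℝ := fun U => if U.card = ℓ then v U else 0 with hv'
  have reind : ∀ (i : Fin n) (g : Finset (Fin n) → ℝ),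
      ∑ W : Finset (Fin n), g (symmDiff W {i}) = ∑ U : Finset (Fin n), g U := by
    intro i g
    exact Fintype.sum_equiv ((symmDiff_left_involutive ({i} : Finset (Fin n))).toPerm) _ _
      (fun W => rfl)
  have key : ∀ i j : Fin n, (1 + V) i j =
      ∑ W : Finset (Fin n), v' (symmDiff W {i}) * v' (symmDiff W {j}) := by
    intro i j
    by_cases hij : i = j
    · subst hij
      rw [reind i (fun U => v' U * v' U)]
      have h1 : ∑ U : Finset (Fin n), v' U * v' U = 1 := by
        rw [← hv, Finset.sum_filter]
        refine Finset.sum_congr rfl fun U _ => ?_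
        by_cases h : U.card = ℓ <;> simp [hv', h, sq]
      rw [h1]
      simp [Matrix.add_apply, Matrix.one_apply, hVdiag]
    · have hset : symmDiff ({i} : Finset (Fin n)) {j} = {i, j} := by
        ext k
        simp only [Finset.mem_symmDiff, Finset.mem_singleton, Finset.mem_insert]
        constructor
        · rintro (⟨h1, _⟩ | ⟨h1, _⟩) <;> tauto
        · rintro (rfl | rfl)
          · exact Or.inl ⟨rfl, hij⟩
          · exact Or.inr ⟨rfl, fun h => hij h.symm⟩
      have h2 : symmDiff ({i} : Finset (Fin n)) ({i, j} : Finset (Fin n)) = {j} := by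
        rw [← hset, symmDiff_symmDiff_cancel_left]
      have step1 : ∑ W : Finset (Fin n), v' (symmDiff W {i}) * v' (symmDiff W {j})
          = ∑ U : Finset (Fin n), v' U * v' (symmDiff U ({i, j} : Finset (Fin n))) := by
        refine Fintype.sum_equiv
          ((symmDiff_left_involutive ({i} : Finset (Fin n))).toPerm) _ _ (fun W => ?_)
        show v' (symmDiff W {i}) * v' (symmDiff W {j})
            = v' (symmDiff W {i}) * v' (symmDiff (symmDiff W {i}) ({i, j} : Finset (Fin n)))
        rw [symmDiff_assoc, h2]
      rw [Matrix.add_apply, Matrix.one_apply_ne hij, hVoff i j hij, step1, zero_add]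
      rw [Finset.sum_filter]
      refine (Finset.sum_congr rfl fun U _ => ?_).symm
      by_cases hU : U.card = ℓ
      · simp only [hU, if_true]
        have hcond : ∀ T : Finset (Fin n), symmDiff U T = {i, j} ↔
            T = symmDiff U ({i,j} : Finset (Fin n)) := by
          intro T
          constructor
          · intro h; rw [← h, symmDiff_symmDiff_cancel_left]
          · rintro rfl; rw [symmDiff_symmDiff_cancel_left]
        have inner : ∑ T ∈ Finset.univ.filter (fun T : Finset (Fin n) => T.card = ℓ),
            v U * v T * (if symmDiff U T = {i, j} then (1:ℝ) else 0)
            = v U * v' (symmDiff U ({i,j} : Finset (Fin n))) := by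
          calc ∑ T ∈ Finset.univ.filter (fun T : Finset (Fin n) => T.card = ℓ),
              v U * v T * (if symmDiff U T = {i, j} then (1:ℝ) else 0)
              = ∑ T ∈ Finset.univ.filter (fun T : Finset (Fin n) => T.card = ℓ),
                (if T = symmDiff U ({i,j} : Finset (Fin n)) then v U * v T else 0) := by
                refine Finset.sum_congr rfl fun T _ => ?_
                rw [mul_ite, mul_one, mul_zero]
                exact if_congr (hcond T) rfl rfl
            _ = if symmDiff U ({i,j} : Finset (Fin n)) ∈
                  Finset.univ.filter (fun T : Finset (Fin n) => T.card = ℓ)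
                then v U * v (symmDiff U ({i,j} : Finset (Fin n))) else 0 :=
                Finset.sum_ite_eq' _ _ _
            _ = v U * v' (symmDiff U ({i,j} : Finset (Fin n))) := by
                by_cases h : (symmDiff U ({i,j} : Finset (Fin n))).card = ℓ <;>
                  simp [hv', h]
        rw [inner]
        congr 1
        simp [hv', hU]
      · simp [hv', hU]
  have hherm1 : (1 + V).IsHermitian := by
    refine Matrix.IsHermitian.ext fun i j => ?_
    rw [key, key]
    simp only [star_trivial]
    exact Finset.sum_congr rfl fun W _ => mul_comm _ _
  have hherm : ((n : ℝ)⁻¹ • (1 + V)).IsHermitian := by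
    unfold Matrix.IsHermitian
    rw [Matrix.conjTranspose_smul, star_trivial, hherm1]
  constructor
  · refine Matrix.PosSemidef.of_dotProduct_mulVec_nonneg hherm fun x => ?_
    have hq : dotProduct (star x) ((1 + V).mulVec x)
        = ∑ W : Finset (Fin n), (∑ i, x i * v' (symmDiff W {i}))^2 := by
      calc dotProduct (star x) ((1 + V).mulVec x)
          = ∑ i, ∑ j, ∑ W : Finset (Fin n),
              x i * v' (symmDiff W {i}) * (x j * v' (symmDiff W {j})) := by
            simp only [dotProduct, Matrix.mulVec, Pi.star_apply, star_trivial, key,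
              Finset.mul_sum, Finset.sum_mul]
            refine Finset.sum_congr rfl fun i _ => Finset.sum_congr rfl fun j _ =>
              Finset.sum_congr rfl fun W _ => by ring
        _ = ∑ W : Finset (Fin n), ∑ i, ∑ j,
              x i * v' (symmDiff W {i}) * (x j * v' (symmDiff W {j})) := by
            rw [show (∑ i, ∑ j, ∑ W : Finset (Fin n),
                x i * v' (symmDiff W {i}) * (x j * v' (symmDiff W {j})))
                = ∑ i, ∑ W : Finset (Fin n), ∑ j,
                x i * v' (symmDiff W {i}) * (x j * v' (symmDiff W {j}))
              from Finset.sum_congr rfl fun i _ => Finset.sum_comm]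
            exact Finset.sum_comm
        _ = ∑ W : Finset (Fin n), (∑ i, x i * v' (symmDiff W {i}))^2 := by
            refine Finset.sum_congr rfl fun W _ => ?_
            rw [sq, Finset.sum_mul_sum]
    have hsc : dotProduct (star x) ((((n : ℝ)⁻¹ • (1 + V))).mulVec x)
        = (n : ℝ)⁻¹ * dotProduct (star x) ((1 + V).mulVec x) := by
      rw [Matrix.smul_mulVec, dotProduct_smul, smul_eq_mul]
    rw [hsc, hq]
    positivity
  · rw [Matrix.trace_smul, Matrix.trace_add, Matrix.trace_one, Fintype.card_fin, smul_eq_mul]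
    have hV0 : Matrix.trace V = 0 := by
      simp [Matrix.trace, Matrix.diag, hVdiag]
    rw [hV0, add_zero]
    field_simp
end
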